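/- Let (u, θ) be a smooth solution with θ > 0 of the 1D thermoelasticity system u_tt - u_xx = μ θ_x, θ_t - θ_xx = μ θ u_tx on (0,T)×(a,b) with u(·,a)=u(·,b)=θ_x(·,a)=θ_x(·,b)=0. Then for all t, (1/2) d/dt ( ∫_a^b θ_x²/θ dx + ∫_a^b u_tx² dx + ∫_a^b u_xx² dx ) = -∫_a^b θ [(log θ)_xx]² dx + (μ/2) ∫_a^b (θ_x²/θ) u_tx dx. -/

import Mathlib

open Set Function MeasureTheory intervalIntegral Metric

/-- Partial derivative in time (first variable). -/
noncomputable def pt (f : ℝ → ℝ → ℝ) : ℝ → ℝ → ℝ := fun t x => deriv (fun s => f s x) t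

/-- Partial derivative in space (second variable). -/
noncomputable def px (f : ℝ → ℝ → ℝ) : ℝ → ℝ → ℝ := fun t x => deriv (fun y => f t y) x

section helpers

variable {E : Type*} [NormedAddCommGroup E] [NormedSpace ℝ E]

lemma hasDerivAt_slice_x (F : ℝ × ℝ → E) {t x : ℝ} (h : DifferentiableAt ℝ F (t, x)) :
    HasDerivAt (fun y => F (t, y)) (fderiv ℝ F (t, x) (0, 1)) x := by
  have h1 : HasDerivAt (fun y : ℝ => ((t, y) : ℝ × ℝ)) ((0 : ℝ), (1 : ℝ)) x :=
    (hasDerivAt_const x t).prodMk (hasDerivAt_id x)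
  exact h.hasFDerivAt.comp_hasDerivAt x h1

lemma hasDerivAt_slice_t (F : ℝ × ℝ → E) {t x : ℝ} (h : DifferentiableAt ℝ F (t, x)) :
    HasDerivAt (fun s => F (s, x)) (fderiv ℝ F (t, x) (1, 0)) t := by
  have h1 : HasDerivAt (fun s : ℝ => ((s, x) : ℝ × ℝ)) ((1 : ℝ), (0 : ℝ)) t :=
    (hasDerivAt_id t).prodMk (hasDerivAt_const t x)
  exact h.hasFDerivAt.comp_hasDerivAt t h1

lemma px_eq {f : ℝ → ℝ → ℝ} (hf : ContDiff ℝ (⊤ : ℕ∞) (uncurry f)) (t x : ℝ) :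
    px f t x = fderiv ℝ (uncurry f) (t, x) (0, 1) :=
  (hasDerivAt_slice_x (uncurry f) (hf.differentiable (by simp) _)).deriv

lemma pt_eq {f : ℝ → ℝ → ℝ} (hf : ContDiff ℝ (⊤ : ℕ∞) (uncurry f)) (t x : ℝ) :
    pt f t x = fderiv ℝ (uncurry f) (t, x) (1, 0) :=
  (hasDerivAt_slice_t (uncurry f) (hf.differentiable (by simp) _)).deriv

lemma contDiff_fderiv_apply {F : ℝ × ℝ → ℝ} (hF : ContDiff ℝ (⊤ : ℕ∞) F) (v : ℝ × ℝ) :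
    ContDiff ℝ (⊤ : ℕ∞) (fun p => fderiv ℝ F p v) :=
  (hF.fderiv_right ((by simp))).clm_apply contDiff_const

lemma contDiff_px {f : ℝ → ℝ → ℝ} (hf : ContDiff ℝ (⊤ : ℕ∞) (uncurry f)) :
    ContDiff ℝ (⊤ : ℕ∞) (uncurry (px f)) := by
  have : uncurry (px f) = fun p => fderiv ℝ (uncurry f) p (0, 1) := by
    funext p
    exact px_eq hf p.1 p.2
  rw [this]
  exact contDiff_fderiv_apply hf _

lemma contDiff_pt {f : ℝ → ℝ → ℝ} (hf : ContDiff ℝ (⊤ : ℕ∞) (uncurry f)) :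
    ContDiff ℝ (⊤ : ℕ∞) (uncurry (pt f)) := by
  have : uncurry (pt f) = fun p => fderiv ℝ (uncurry f) p (1, 0) := by
    funext p
    exact pt_eq hf p.1 p.2
  rw [this]
  exact contDiff_fderiv_apply hf _

lemma hasDerivAt_px {f : ℝ → ℝ → ℝ} (hf : ContDiff ℝ (⊤ : ℕ∞) (uncurry f)) (t x : ℝ) :
    HasDerivAt (fun y => f t y) (px f t x) x := by
  rw [px_eq hf]
  exact hasDerivAt_slice_x (uncurry f) (hf.differentiable (by simp) _)

lemma hasDerivAt_pt {f : ℝ → ℝ → ℝ} (hf : ContDiff ℝ (⊤ : ℕ∞) (uncurry f)) (t x : ℝ) :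
    HasDerivAt (fun s => f s x) (pt f t x) t := by
  rw [pt_eq hf]
  exact hasDerivAt_slice_t (uncurry f) (hf.differentiable (by simp) _)

end helpers

lemma pt_px_comm {f : ℝ → ℝ → ℝ} (hf : ContDiff ℝ (⊤ : ℕ∞) (uncurry f)) :
    pt (px f) = px (pt f) := by
  funext t x
  set F := uncurry f with hF
  set D := fderiv ℝ F with hD
  have hDc : ContDiff ℝ (⊤ : ℕ∞) D := hf.fderiv_right (by simp)
  have hfd : ∀ q : ℝ × ℝ, HasFDerivAt F (D q) q := fun q =>
    (hf.differentiable (by simp) q).hasFDerivAt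
  have hDd : HasFDerivAt D (fderiv ℝ D (t, x)) (t, x) :=
    (hDc.differentiable (by simp) _).hasFDerivAt
  have symm := second_derivative_symmetric hfd hDd
  have e1 : ∀ v : ℝ × ℝ, fderiv ℝ (fun p => D p v) (t, x) =
      (fderiv ℝ D (t, x)).flip v := by
    intro v
    have : HasFDerivAt (fun p => D p v) ((fderiv ℝ D (t, x)).flip v) (t, x) := by
      have := hDd.clm_apply (hasFDerivAt_const v (t, x))
      simpa using this
    exact this.fderiv
  have e2 : uncurry (pt f) = fun p => D p (1, 0) := by
    funext p; exact pt_eq hf p.1 p.2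
  have e3 : uncurry (px f) = fun p => D p (0, 1) := by
    funext p; exact px_eq hf p.1 p.2
  have l1 : pt (px f) t x = fderiv ℝ (uncurry (px f)) (t, x) (1, 0) :=
    pt_eq (contDiff_px hf) t x
  have l2 : px (pt f) t x = fderiv ℝ (uncurry (pt f)) (t, x) (0, 1) :=
    px_eq (contDiff_pt hf) t x
  rw [l1, l2, e2, e3, e1, e1]
  simpa using symm (1, 0) (0, 1)

lemma param_deriv {F F' : ℝ → ℝ → ℝ} {a b t ε : ℝ} (hab : a ≤ b) (hε : 0 < ε)
    (hcont : ∀ s ∈ Icc (t - ε) (t + ε), ContinuousOn (F s) (Icc a b))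
    (hder : ∀ s ∈ Icc (t - ε) (t + ε), ∀ x ∈ Icc a b,
      HasDerivAt (fun r => F r x) (F' s x) s)
    (hF' : ContinuousOn (uncurry F') (Icc (t - ε) (t + ε) ×ˢ Icc a b)) :
    HasDerivAt (fun s => ∫ x in a..b, F s x) (∫ x in a..b, F' t x) t := by
  have htmem : t ∈ Icc (t - ε) (t + ε) := by
    constructor <;> linarith
  have hball : ball t ε ⊆ Icc (t - ε) (t + ε) := by
    rw [Real.ball_eq_Ioo]; exact Ioo_subset_Icc_self
  have hIoc : uIoc a b ⊆ Icc a b := by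
    rw [uIoc_of_le hab]; exact Ioc_subset_Icc_self
  obtain ⟨C, hC⟩ : ∃ C, ∀ p ∈ Icc (t - ε) (t + ε) ×ˢ Icc a b, ‖uncurry F' p‖ ≤ C :=
    ((isCompact_Icc.prod isCompact_Icc).exists_bound_of_continuousOn hF')
  have main := intervalIntegral.hasDerivAt_integral_of_dominated_loc_of_deriv_le
    (F := F) (F' := F') (x₀ := t) (bound := fun _ => C) (μ := volume) (a := a) (b := b) (ball_mem_nhds t hε)
    ?_ ?_ ?_ ?_ ?_ ?_
  · exact main.2
  · filter_upwards [ball_mem_nhds t hε] with s hs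
    exact ((hcont s (hball hs)).mono hIoc).aestronglyMeasurable measurableSet_uIoc
  · apply ContinuousOn.intervalIntegrable
    rw [uIcc_of_le hab]
    exact hcont t htmem
  · have : ContinuousOn (F' t) (Icc a b) := by
      have : ContinuousOn (fun x => uncurry F' (t, x)) (Icc a b) :=
        hF'.comp (Continuous.continuousOn (by fun_prop)) (fun x hx => ⟨htmem, hx⟩)
      exact this
    exact (this.mono hIoc).aestronglyMeasurable measurableSet_uIoc
  · filter_upwards with x hx s hs
    exact hC (s, x) ⟨hball hs, hIoc hx⟩
  · exact intervalIntegrable_const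
  · filter_upwards with x hx s hs
    exact hder s (hball hs) x (hIoc hx)

lemma cont_x {g : ℝ → ℝ → ℝ} (hg : ContDiff ℝ (⊤ : ℕ∞) (uncurry g)) (t : ℝ) :
    Continuous (g t) :=
  hg.continuous.comp (continuous_const.prodMk continuous_id)


lemma integral_congr_Ioo {f g : ℝ → ℝ} {a b : ℝ} (hab : a ≤ b)
    (h : ∀ x ∈ Set.Ioo a b, f x = g x) :
    ∫ x in a..b, f x = ∫ x in a..b, g x := by
  apply intervalIntegral.integral_congr_ae
  have hb : ({b}ᶜ : Set ℝ) ∈ MeasureTheory.ae MeasureTheory.volume :=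
    MeasureTheory.compl_mem_ae_iff.mpr (MeasureTheory.measure_singleton b)
  filter_upwards [hb] with x hx hxI
  rw [uIoc_of_le hab] at hxI
  exact h x ⟨hxI.1, lt_of_le_of_ne hxI.2 hx⟩

theorem stmt_6 (a b T μ : ℝ) (hab : a < b) (hT : 0 < T)
    (u θ : ℝ → ℝ → ℝ)
    (hu : ContDiff ℝ (⊤ : ℕ∞) (Function.uncurry u)) (hθ : ContDiff ℝ (⊤ : ℕ∞) (Function.uncurry θ))
    (hpos : ∀ t ∈ Set.Icc 0 T, ∀ x ∈ Set.Icc a b, 0 < θ t x)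
    (heq1 : ∀ t ∈ Set.Ioo 0 T, ∀ x ∈ Set.Ioo a b,
      pt (pt u) t x - px (px u) t x = μ * px θ t x)
    (heq2 : ∀ t ∈ Set.Ioo 0 T, ∀ x ∈ Set.Ioo a b,
      pt θ t x - px (px θ) t x = μ * θ t x * px (pt u) t x)
    (hbc : ∀ t ∈ Set.Icc 0 T,
      u t a = 0 ∧ u t b = 0 ∧ px θ t a = 0 ∧ px θ t b = 0) :
    ∀ t ∈ Set.Ioo 0 T,
      (1 / 2) * deriv (fun s =>
          (∫ x in a..b, (px θ s x) ^ 2 / θ s x) +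
          (∫ x in a..b, (px (pt u) s x) ^ 2) +
          (∫ x in a..b, (px (px u) s x) ^ 2)) t =
        -(∫ x in a..b, θ t x * (px (px (fun s y => Real.log (θ s y))) t x) ^ 2) +
          (μ / 2) * ∫ x in a..b, ((px θ t x) ^ 2 / θ t x) * px (pt u) t x := by
  intro t ht
  -- smoothness of all derived functions
  have hut : ContDiff ℝ (⊤ : ℕ∞) (uncurry (pt u)) := contDiff_pt hu
  have hux : ContDiff ℝ (⊤ : ℕ∞) (uncurry (px u)) := contDiff_px hu
  have hutx : ContDiff ℝ (⊤ : ℕ∞) (uncurry (px (pt u))) := contDiff_px hut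
  have huxx : ContDiff ℝ (⊤ : ℕ∞) (uncurry (px (px u))) := contDiff_px hux
  have hutt : ContDiff ℝ (⊤ : ℕ∞) (uncurry (pt (pt u))) := contDiff_pt hut
  have huxxx : ContDiff ℝ (⊤ : ℕ∞) (uncurry (px (px (px u)))) := contDiff_px huxx
  have hutxx : ContDiff ℝ (⊤ : ℕ∞) (uncurry (px (px (pt u)))) := contDiff_px hutx
  have hθx : ContDiff ℝ (⊤ : ℕ∞) (uncurry (px θ)) := contDiff_px hθ
  have hθt : ContDiff ℝ (⊤ : ℕ∞) (uncurry (pt θ)) := contDiff_pt hθ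
  have hθxx : ContDiff ℝ (⊤ : ℕ∞) (uncurry (px (px θ))) := contDiff_px hθx
  have hθtx : ContDiff ℝ (⊤ : ℕ∞) (uncurry (px (pt θ))) := contDiff_px hθt
  -- choose ε
  obtain ⟨r, hr, hrsub⟩ := Metric.mem_nhds_iff.1 (isOpen_Ioo.mem_nhds ht)
  set ε := r / 2 with hεdef
  have hε : 0 < ε := by positivity
  have hsub : Set.Icc (t - ε) (t + ε) ⊆ Set.Ioo 0 T := by
    intro s hs
    apply hrsub
    rw [← Real.closedBall_eq_Icc] at hs
    exact closedBall_subset_ball (by simp [hεdef]; linarith) hs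
  have htmem : t ∈ Set.Icc (t - ε) (t + ε) := ⟨by linarith, by linarith⟩
  have hposs : ∀ s ∈ Set.Icc (t - ε) (t + ε), ∀ x ∈ Set.Icc a b, 0 < θ s x :=
    fun s hs x hx => hpos s (Set.Ioo_subset_Icc_self (hsub hs)) x hx
  have htIcc : t ∈ Set.Icc 0 T := Set.Ioo_subset_Icc_self ht
  -- the three t-derivatives under the integral
  set D1 : ℝ → ℝ → ℝ := fun s x =>
    (2 * px θ s x * pt (px θ) s x * θ s x - (px θ s x) ^ 2 * pt θ s x) / (θ s x) ^ 2
    with hD1def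
  set D2 : ℝ → ℝ → ℝ := fun s x => 2 * px (pt u) s x * pt (px (pt u)) s x with hD2def
  set D3 : ℝ → ℝ → ℝ := fun s x => 2 * px (px u) s x * pt (px (px u)) s x with hD3def
  have hI1 : HasDerivAt (fun s => ∫ x in a..b, (px θ s x) ^ 2 / θ s x)
      (∫ x in a..b, D1 t x) t := by
    apply param_deriv hab.le hε
    · intro s hs
      exact ((cont_x hθx s).pow 2).continuousOn.div (cont_x hθ s).continuousOn
        (fun x hx => (hposs s hs x hx).ne')
    · intro s hs x hx
      have h1 : HasDerivAt (fun r => (px θ r x) ^ 2) (2 * px θ s x * pt (px θ) s x) s := by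
        have := (hasDerivAt_pt hθx s x).fun_pow 2
        refine this.congr_deriv ?_
        push_cast
        ring
      exact h1.div (hasDerivAt_pt hθ s x) (hposs s hs x hx).ne'
    · apply ContinuousOn.div
      · exact Continuous.continuousOn (by
          have c1 : Continuous (uncurry (px θ)) := hθx.continuous
          have c2 : Continuous (uncurry (pt (px θ))) := (contDiff_pt hθx).continuous
          have c3 : Continuous (uncurry θ) := hθ.continuous
          have c4 : Continuous (uncurry (pt θ)) := hθt.continuous
          exact ((((continuous_const.mul c1).mul c2).mul c3).sub ((c1.pow 2).mul c4)))
      · exact Continuous.continuousOn (hθ.continuous.pow 2)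
      · intro p hp
        exact pow_ne_zero _ (hposs p.1 hp.1 p.2 hp.2).ne'
  have hI2 : HasDerivAt (fun s => ∫ x in a..b, (px (pt u) s x) ^ 2)
      (∫ x in a..b, D2 t x) t := by
    apply param_deriv hab.le hε
    · intro s _
      exact ((cont_x hutx s).pow 2).continuousOn
    · intro s _ x _
      have := (hasDerivAt_pt hutx s x).fun_pow 2
      refine this.congr_deriv ?_
      push_cast
      ring
    · exact Continuous.continuousOn (by
        have c1 : Continuous (uncurry (px (pt u))) := hutx.continuous
        have c2 : Continuous (uncurry (pt (px (pt u)))) := (contDiff_pt hutx).continuous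
        exact (continuous_const.mul c1).mul c2)
  have hI3 : HasDerivAt (fun s => ∫ x in a..b, (px (px u) s x) ^ 2)
      (∫ x in a..b, D3 t x) t := by
    apply param_deriv hab.le hε
    · intro s _
      exact ((cont_x huxx s).pow 2).continuousOn
    · intro s _ x _
      have := (hasDerivAt_pt huxx s x).fun_pow 2
      refine this.congr_deriv ?_
      push_cast
      ring
    · exact Continuous.continuousOn (by
        have c1 : Continuous (uncurry (px (px u))) := huxx.continuous
        have c2 : Continuous (uncurry (pt (px (px u)))) := (contDiff_pt huxx).continuous
        exact (continuous_const.mul c1).mul c2)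
  have hderiv : deriv (fun s =>
      (∫ x in a..b, (px θ s x) ^ 2 / θ s x) +
      (∫ x in a..b, (px (pt u) s x) ^ 2) +
      (∫ x in a..b, (px (px u) s x) ^ 2)) t
      = (∫ x in a..b, D1 t x) + (∫ x in a..b, D2 t x) + (∫ x in a..b, D3 t x) :=
    ((hI1.add hI2).add hI3).deriv
  rw [hderiv]
  -- fixed-t notation and facts
  have hpost : ∀ x ∈ Set.Icc a b, 0 < θ t x := hpos t htIcc
  obtain ⟨-, -, hPa, hPb⟩ := hbc t htIcc
  -- time derivatives of u vanish at the endpoints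
  have hutz : ∀ c : ℝ, (∀ s ∈ Set.Icc 0 T, u s c = 0) → pt (pt u) t c = 0 := by
    intro c hc
    have hut0 : ∀ s ∈ Set.Ioo 0 T, pt u s c = 0 := by
      intro s hs
      have hev : (fun r => u r c) =ᶠ[nhds s] fun _ => (0 : ℝ) := by
        filter_upwards [isOpen_Ioo.mem_nhds hs] with r hr
        exact hc r (Set.Ioo_subset_Icc_self hr)
      show deriv (fun r => u r c) s = 0
      rw [hev.deriv_eq, deriv_const]
    have hev2 : (fun s => pt u s c) =ᶠ[nhds t] fun _ => (0 : ℝ) := by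
      filter_upwards [isOpen_Ioo.mem_nhds ht] with s hs
      exact hut0 s hs
    show deriv (fun s => pt u s c) t = 0
    rw [hev2.deriv_eq, deriv_const]
  have hutta : pt (pt u) t a = 0 := hutz a (fun s hs => (hbc s hs).1)
  have huttb : pt (pt u) t b = 0 := hutz b (fun s hs => (hbc s hs).2.1)
  -- PDE 1 extends to the closed interval, giving uxx = 0 at endpoints
  have hA2 : ∀ c ∈ Set.Icc a b, pt (pt u) t c = 0 → px θ t c = 0 → px (px u) t c = 0 := by
    intro c hc hc1 hc2
    have hφ : Set.EqOn (fun x => pt (pt u) t x - px (px u) t x - μ * px θ t x)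
        (fun _ => (0 : ℝ)) (Set.Icc a b) := by
      rw [← closure_Ioo hab.ne]
      apply Set.EqOn.closure _ (((cont_x hutt t).sub (cont_x huxx t)).sub
        (continuous_const.mul (cont_x hθx t))) continuous_const
      intro x hx
      have := heq1 t ht x hx
      simp only [Pi.sub_apply, Pi.mul_apply]
      linarith
    have := hφ hc
    simp only [hc1, hc2, mul_zero, sub_zero] at this
    linarith [this]
  have hA2a : px (px u) t a = 0 := hA2 a (Set.left_mem_Icc.2 hab.le) hutta hPa
  have hA2b : px (px u) t b = 0 := hA2 b (Set.right_mem_Icc.2 hab.le) huttb hPb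
  -- second derivative of log θ
  have hU : IsOpen {y : ℝ | 0 < θ t y} := isOpen_lt continuous_const (cont_x hθ t)
  have hL1 : ∀ y, 0 < θ t y → px (fun s y => Real.log (θ s y)) t y = px θ t y / θ t y := by
    intro y hy
    exact (((hasDerivAt_px hθ t y).log hy.ne')).deriv
  have hL2 : ∀ x ∈ Set.Icc a b, px (px (fun s y => Real.log (θ s y))) t x =
      (px (px θ) t x * θ t x - px θ t x * px θ t x) / (θ t x) ^ 2 := by
    intro x hx
    have hxU : x ∈ {y : ℝ | 0 < θ t y} := hpost x hx
    have hev : (fun y => px (fun s y => Real.log (θ s y)) t y) =ᶠ[nhds x]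
        (fun y => px θ t y / θ t y) := by
      filter_upwards [hU.mem_nhds hxU] with y hy
      exact hL1 y hy
    show deriv _ x = _
    rw [hev.deriv_eq]
    exact ((hasDerivAt_px hθx t x).div (hasDerivAt_px hθ t x) (hpost x hx).ne').deriv
  -- the exact-derivative function G and its derivative H
  set g : ℝ → ℝ := fun x => px (pt u) t x * px (px u) t x +
    px θ t x * pt θ t x / θ t x - (1 / 2) * ((px θ t x) ^ 3 / (θ t x) ^ 2) with hgdef
  set H : ℝ → ℝ := fun x =>
    (px (px (pt u)) t x * px (px u) t x + px (pt u) t x * px (px (px u)) t x) +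
    ((px (px θ) t x * pt θ t x + px θ t x * px (pt θ) t x) * θ t x -
      px θ t x * pt θ t x * px θ t x) / (θ t x) ^ 2 -
    (1 / 2) * ((3 * (px θ t x) ^ 2 * px (px θ) t x * (θ t x) ^ 2 -
      (px θ t x) ^ 3 * (2 * θ t x * px θ t x)) / ((θ t x) ^ 2) ^ 2) with hHdef
  have hgH : ∀ x ∈ Set.Icc a b, HasDerivAt g (H x) x := by
    intro x hx
    have hne := (hpost x hx).ne'
    have d1 := (hasDerivAt_px hutx t x).fun_mul (hasDerivAt_px huxx t x)
    have d2 := ((hasDerivAt_px hθx t x).fun_mul (hasDerivAt_px hθt t x)).fun_div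
      (hasDerivAt_px hθ t x) hne
    have d3 := (((hasDerivAt_px hθx t x).fun_pow 3).fun_div ((hasDerivAt_px hθ t x).fun_pow 2)
      (pow_ne_zero 2 hne)).const_mul (1 / 2 : ℝ)
    have := (d1.fun_add d2).fun_sub d3
    refine this.congr_deriv ?_
    simp only [hHdef]
    push_cast
    ring
  have hHcont : ContinuousOn H (Set.Icc a b) := by
    have hne : ∀ x ∈ Set.Icc a b, (θ t x) ^ 2 ≠ 0 := fun x hx => pow_ne_zero _ (hpost x hx).ne'
    apply ContinuousOn.sub
    apply ContinuousOn.add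
    · exact (((cont_x hutxx t).mul (cont_x huxx t)).add
        ((cont_x hutx t).mul (cont_x huxxx t))).continuousOn
    · exact ContinuousOn.div (Continuous.continuousOn (by
        exact ((((cont_x hθxx t).mul (cont_x hθt t)).add
          ((cont_x hθx t).mul (cont_x hθtx t))).mul (cont_x hθ t)).sub
          (((cont_x hθx t).mul (cont_x hθt t)).mul (cont_x hθx t))))
        ((cont_x hθ t).pow 2).continuousOn hne
    · exact ContinuousOn.mul continuousOn_const (ContinuousOn.div
        (Continuous.continuousOn (by
          exact ((continuous_const.mul ((cont_x hθx t).pow 2)).mul (cont_x hθxx t)).mul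
            ((cont_x hθ t).pow 2) |>.sub (((cont_x hθx t).pow 3).mul
            ((continuous_const.mul (cont_x hθ t)).mul (cont_x hθx t)))))
        (((cont_x hθ t).pow 2).pow 2).continuousOn
        (fun x hx => pow_ne_zero _ (hne x hx)))
  have hHint : IntervalIntegrable H MeasureTheory.volume a b :=
    ContinuousOn.intervalIntegrable (by rwa [Set.uIcc_of_le hab.le]) 
  have hintH : (∫ x in a..b, H x) = 0 := by
    rw [intervalIntegral.integral_eq_sub_of_hasDerivAt
      (fun x hx => hgH x (by rwa [Set.uIcc_of_le hab.le] at hx)) hHint]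
    simp only [hgdef, hPa, hPb, hA2a, hA2b]
    ring
  -- commutation of partial derivatives and the PDE rewrites
  have f4fun : pt (px (px u)) = px (px (pt u)) := by
    rw [pt_px_comm hux, pt_px_comm hu]
  have hkey : ∀ x ∈ Set.Ioo a b, D1 t x + D2 t x + D3 t x =
      2 * (-(θ t x * (px (px (fun s y => Real.log (θ s y))) t x) ^ 2) +
        (μ / 2) * (((px θ t x) ^ 2 / θ t x) * px (pt u) t x)) + 2 * H x := by
    intro x hx
    have hxI : x ∈ Set.Icc a b := Set.Ioo_subset_Icc_self hx
    have hθv := hpost x hxI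
    have f1 : pt θ t x = px (px θ) t x + μ * θ t x * px (pt u) t x := by
      have := heq2 t ht x hx; linarith
    have f2 : pt (px θ) t x = px (pt θ) t x := congrFun (congrFun (pt_px_comm hθ) t) x
    have f3 : pt (px (pt u)) t x = px (px (px u)) t x + μ * px (px θ) t x := by
      have e : pt (px (pt u)) t x = px (pt (pt u)) t x :=
        congrFun (congrFun (pt_px_comm hut) t) x
      rw [e]
      have hev : (fun y => pt (pt u) t y) =ᶠ[nhds x]
          (fun y => px (px u) t y + μ * px θ t y) := by
        filter_upwards [isOpen_Ioo.mem_nhds hx] with y hy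
        have := heq1 t ht y hy; linarith
      show deriv _ x = _
      rw [hev.deriv_eq]
      exact ((hasDerivAt_px huxx t x).add ((hasDerivAt_px hθx t x).const_mul μ)).deriv
    have f4 : pt (px (px u)) t x = px (px (pt u)) t x := congrFun (congrFun f4fun t) x
    have f5 := hL2 x hxI
    simp only [hD1def, hD2def, hD3def, hHdef, f1, f2, f3, f4, f5]
    field_simp
    ring
  -- integrability of all pieces
  set RL : ℝ → ℝ := fun x => θ t x * (px (px (fun s y => Real.log (θ s y))) t x) ^ 2
    with hRLdef
  set RA : ℝ → ℝ := fun x => ((px θ t x) ^ 2 / θ t x) * px (pt u) t x with hRAdef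
  have hne2 : ∀ x ∈ Set.Icc a b, (θ t x) ^ 2 ≠ 0 := fun x hx => pow_ne_zero _ (hpost x hx).ne'
  have iD1 : IntervalIntegrable (D1 t) MeasureTheory.volume a b := by
    apply ContinuousOn.intervalIntegrable
    rw [Set.uIcc_of_le hab.le]
    exact ContinuousOn.div (Continuous.continuousOn (by
      exact (((continuous_const.mul (cont_x hθx t)).mul (cont_x (contDiff_pt hθx) t)).mul
        (cont_x hθ t)).sub (((cont_x hθx t).pow 2).mul (cont_x hθt t))))
      ((cont_x hθ t).pow 2).continuousOn hne2
  have iD2 : IntervalIntegrable (D2 t) MeasureTheory.volume a b := by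
    apply Continuous.intervalIntegrable
    exact (continuous_const.mul (cont_x hutx t)).mul (cont_x (contDiff_pt hutx) t)
  have iD3 : IntervalIntegrable (D3 t) MeasureTheory.volume a b := by
    apply Continuous.intervalIntegrable
    exact (continuous_const.mul (cont_x huxx t)).mul (cont_x (contDiff_pt huxx) t)
  have iRL : IntervalIntegrable RL MeasureTheory.volume a b := by
    apply ContinuousOn.intervalIntegrable
    rw [Set.uIcc_of_le hab.le]
    apply ContinuousOn.congr (f := fun x => θ t x *
      ((px (px θ) t x * θ t x - px θ t x * px θ t x) / (θ t x) ^ 2) ^ 2)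
    · exact (cont_x hθ t).continuousOn.mul ((ContinuousOn.div (Continuous.continuousOn (by
        exact ((cont_x hθxx t).mul (cont_x hθ t)).sub ((cont_x hθx t).mul (cont_x hθx t))))
        ((cont_x hθ t).pow 2).continuousOn hne2).pow 2)
    · intro x hx
      simp only [hRLdef, hL2 x hx]
  have iRA : IntervalIntegrable RA MeasureTheory.volume a b := by
    apply ContinuousOn.intervalIntegrable
    rw [Set.uIcc_of_le hab.le]
    exact (ContinuousOn.div ((cont_x hθx t).pow 2).continuousOn
      (cont_x hθ t).continuousOn (fun x hx => (hpost x hx).ne')).mul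
      (cont_x hutx t).continuousOn
  -- assemble
  have iA : IntervalIntegrable (fun x => -RL x + (μ / 2) * RA x) MeasureTheory.volume a b :=
    iRL.neg.add (iRA.const_mul _)
  have hsplit : (∫ x in a..b, D1 t x) + (∫ x in a..b, D2 t x) + (∫ x in a..b, D3 t x)
      = 2 * ((-∫ x in a..b, RL x) + (μ / 2) * ∫ x in a..b, RA x) + 2 * 0 := by
    rw [← intervalIntegral.integral_add iD1 iD2,
        ← intervalIntegral.integral_add (iD1.add iD2) iD3]
    rw [integral_congr_Ioo hab.le hkey]
    rw [intervalIntegral.integral_add (iA.const_mul 2) (hHint.const_mul 2)]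
    rw [intervalIntegral.integral_const_mul, intervalIntegral.integral_const_mul,
        intervalIntegral.integral_add (f := fun x => -RL x) (g := fun x => μ / 2 * RA x)
          iRL.neg (iRA.const_mul _),
        intervalIntegral.integral_neg, intervalIntegral.integral_const_mul, hintH]
  rw [hsplit]
  ring
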